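/- arXiv:1302.3345 — 7 statements merged into one kernel-verified Lean document; each statement's English description precedes it below -/
import Mathlib

section
/- Let L be a left Leibniz algebra over a field k of characteristic 0 and let x ∈ L. Then for every n ≥ 1, (r_x)^n = (-1)^{n-1} r_x ∘ (l_x)^{n-1} as linear operators on L. In particular, if l_x is a nilpotent linear operator then r_x is nilpotent. -/
/-
Basic notions for (left) Leibniz algebras, given by a bilinear bracket
`β : M →ₗ[k] M →ₗ[k] M` on a `k`-vector space `M`.
-/

section LeibnizDefs

variable {k : Type*} [Field k] {M : Type*} [AddCommGroup M] [Module k M]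

/-- `[A, B]`: the linear span of brackets of elements of two subspaces. -/
def bracketSpan (β : M →ₗ[k] M →ₗ[k] M) (A B : Submodule k M) : Submodule k M :=
  Submodule.span k {z : M | ∃ a ∈ A, ∃ b ∈ B, z = β a b}

/-- Derived series of a subspace `I`: `D^0 = I`, `D^{n+1} = [D^n, D^n]`. -/
def derivedSeriesOf (β : M →ₗ[k] M →ₗ[k] M) (I : Submodule k M) : ℕ → Submodule k M
  | 0 => I
  | n + 1 => bracketSpan β (derivedSeriesOf β I n) (derivedSeriesOf β I n)

/-- Lower central series of a subspace `I`: `C^0 = I`, `C^{n+1} = [I, C^n]`. -/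
def lowerCentralSeriesOf (β : M →ₗ[k] M →ₗ[k] M) (I : Submodule k M) : ℕ → Submodule k M
  | 0 => I
  | n + 1 => bracketSpan β I (lowerCentralSeriesOf β I n)

/-- A two-sided ideal. -/
def LeibnizIdeal (β : M →ₗ[k] M →ₗ[k] M) (I : Submodule k M) : Prop :=
  (∀ x : M, ∀ u ∈ I, β x u ∈ I) ∧ (∀ u ∈ I, ∀ x : M, β u x ∈ I)

/-- A subspace is solvable if its derived series reaches `0`. -/
def LeibnizSolvable (β : M →ₗ[k] M →ₗ[k] M) (I : Submodule k M) : Prop :=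
  ∃ n, derivedSeriesOf β I n = ⊥

/-- A subspace is nilpotent if its lower central series reaches `0`. -/
def LeibnizNilpotent (β : M →ₗ[k] M →ₗ[k] M) (I : Submodule k M) : Prop :=
  ∃ n, lowerCentralSeriesOf β I n = ⊥

/-- A subalgebra: a subspace closed under the bracket. -/
def LeibnizSubalgebra (β : M →ₗ[k] M →ₗ[k] M) (S : Submodule k M) : Prop :=
  ∀ u ∈ S, ∀ v ∈ S, β u v ∈ S

end LeibnizDefs

/-- `(r_x)^n = (-1)^{n-1} r_x ∘ (l_x)^{n-1}`; hence `l_x` nilpotent implies `r_x` nilpotent. -/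
theorem stmt_3 {k : Type*} [Field k] [CharZero k] {L : Type*} [AddCommGroup L] [Module k L]
    (β : L →ₗ[k] L →ₗ[k] L)
    (leib : ∀ x y z : L, β x (β y z) = β (β x y) z + β y (β x z)) (x : L) :
    (∀ n : ℕ, 1 ≤ n →
      (β.flip x : Module.End k L) ^ n =
        ((-1 : k) ^ (n - 1)) • ((β.flip x : Module.End k L) ∘ₗ (β x : Module.End k L) ^ (n - 1))) ∧
    (IsNilpotent (β x : Module.End k L) → IsNilpotent (β.flip x : Module.End k L)) := by
  set R : Module.End k L := β.flip x with hR
  set A : Module.End k L := β x with hA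
  have key : R ∘ₗ R = -(R ∘ₗ A) := by
    ext y
    simp only [LinearMap.comp_apply, LinearMap.neg_apply, hR, hA, LinearMap.flip_apply]
    have h1 := leib y x x
    have h2 := leib x y x
    have h3 : β (β y x) x = β y (β x x) - β x (β y x) := by rw [h1]; abel
    rw [h2] at h3
    rw [h3]; abel
  have key' : ∀ z : L, R (R z) = -(R (A z)) := by
    intro z
    have := congrFun (congrArg DFunLike.coe key) z
    simpa using this
  have main : ∀ n : ℕ, 1 ≤ n → R ^ n = ((-1 : k) ^ (n - 1)) • (R ∘ₗ A ^ (n - 1)) := by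
    intro n hn
    induction n with
    | zero => omega
    | succ m ih =>
      rcases Nat.eq_or_lt_of_le hn with h | h
      · obtain rfl : m = 0 := by omega
        simp
        rfl
      · have hm : 1 ≤ m := by omega
        have ihm := ih hm
        have hms : m + 1 - 1 = (m - 1) + 1 := by omega
        have hcomm : A * A ^ (m - 1) = A ^ (m - 1) * A := ((Commute.refl A).pow_right (m - 1)).eq
        have hcomm' : ∀ y : L, A ((A ^ (m - 1)) y) = (A ^ (m - 1)) (A y) := by
          intro y
          have := congrFun (congrArg DFunLike.coe hcomm) y
          simpa using this
        rw [pow_succ', ihm, hms]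
        ext y
        simp only [Module.End.mul_apply, LinearMap.smul_apply, LinearMap.comp_apply, pow_succ,
          map_smul, Module.End.mul_apply]
        rw [key' ((A ^ (m - 1)) y), hcomm', smul_neg, mul_neg_one, neg_smul]
  refine ⟨main, ?_⟩
  rintro ⟨m, hm⟩
  refine ⟨m + 1, ?_⟩
  rw [main (m + 1) (by omega)]
  simp [hm]
end

section
/- (Proposition 2, Engel's theorem for Leibniz algebras) Let L be a finite-dimensional left Leibniz algebra over a field k of characteristic 0. If for every x ∈ L the left multiplication operator l_x is nilpotent, then L is a nilpotent Leibniz algebra. -/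
/-
The left multiplications `l_x` form a Lie subalgebra `𝔩` of `End L`, since the left Leibniz
identity says exactly that `⁅l_x, l_y⁆ = l_{[x,y]}`. Each `l_x` is nilpotent, so Engel's theorem
for Lie modules makes `L` a nilpotent `𝔩`-module, and the lower central series of the Leibniz
algebra `L` lies termwise in the lower central series of `L` as an `𝔩`-module.
-/

attribute [local instance] LieRing.ofAssociativeRing

section LeftMul

variable {R : Type*} [CommRing R] {L : Type*} [AddCommGroup L] [Module R L]
  (β : L →ₗ[R] L →ₗ[R] L)

theorem lie_leftMul (leib : ∀ x y z : L, β x (β y z) = β (β x y) z + β y (β x z)) (x y : L) :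
    ⁅β x, β y⁆ = β (β x y) := by
  ext z
  rw [Ring.lie_def, LinearMap.sub_apply, Module.End.mul_apply, Module.End.mul_apply, leib]
  abel

variable (leib : ∀ x y z : L, β x (β y z) = β (β x y) z + β y (β x z))

def leftMulLieSubalgebra : LieSubalgebra R (Module.End R L) :=
  { LinearMap.range β with
    lie_mem' := by
      rintro _ _ ⟨x, rfl⟩ ⟨y, rfl⟩
      exact ⟨β x y, (lie_leftMul β leib x y).symm⟩ }

theorem leftMul_mem_leftMulLieSubalgebra (x : L) : β x ∈ leftMulLieSubalgebra β leib :=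
  ⟨x, rfl⟩

theorem toEnd_leftMulLieSubalgebra (f : leftMulLieSubalgebra β leib) :
    LieModule.toEnd R (leftMulLieSubalgebra β leib) L f = f := by
  rw [LieSubalgebra.toEnd_eq, LieModule.toEnd_module_end]
  rfl

theorem isNilpotent_toEnd_leftMulLieSubalgebra (hnil : ∀ x : L, IsNilpotent (β x))
    (f : leftMulLieSubalgebra β leib) :
    IsNilpotent (LieModule.toEnd R (leftMulLieSubalgebra β leib) L f) := by
  obtain ⟨_, x, rfl⟩ := f
  rw [toEnd_leftMulLieSubalgebra]
  exact hnil x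

end LeftMul

theorem lowerCentralSeriesOf_top_le_lowerCentralSeries {k : Type*} [Field k] {L : Type*}
    [AddCommGroup L] [Module k L] (β : L →ₗ[k] L →ₗ[k] L)
    (leib : ∀ x y z : L, β x (β y z) = β (β x y) z + β y (β x z)) (n : ℕ) :
    lowerCentralSeriesOf β ⊤ n ≤
      (LieModule.lowerCentralSeries k (leftMulLieSubalgebra β leib) L n : Submodule k L) := by
  induction n with
  | zero => simp [lowerCentralSeriesOf]
  | succ n ih =>
    refine Submodule.span_le.mpr ?_
    rintro _ ⟨x, -, y, hy, rfl⟩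
    rw [SetLike.mem_coe, LieSubmodule.mem_toSubmodule, LieModule.lowerCentralSeries_succ]
    exact LieSubmodule.lie_mem_lie (x := ⟨β x, leftMul_mem_leftMulLieSubalgebra β leib x⟩)
      (LieSubmodule.mem_top _) (ih hy)

theorem stmt_6_general {k : Type*} [Field k] {L : Type*} [AddCommGroup L] [Module k L]
    [FiniteDimensional k L] (β : L →ₗ[k] L →ₗ[k] L)
    (leib : ∀ x y z : L, β x (β y z) = β (β x y) z + β y (β x z))
    (hnil : ∀ x : L, IsNilpotent (β x : Module.End k L)) :
    LeibnizNilpotent β (⊤ : Submodule k L) := by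
  have engel : LieModule.IsNilpotent (leftMulLieSubalgebra β leib) L :=
    LieModule.isNilpotent_iff_forall'.mpr (isNilpotent_toEnd_leftMulLieSubalgebra β leib hnil)
  obtain ⟨n, hn⟩ := (LieModule.isNilpotent_iff k _ L).mp engel
  refine ⟨n, le_bot_iff.mp ?_⟩
  simpa [hn] using lowerCentralSeriesOf_top_le_lowerCentralSeries β leib n

/-- Engel's theorem for Leibniz algebras: if all left multiplications are nilpotent
operators, then the algebra is nilpotent. -/
theorem stmt_6 {k : Type*} [Field k] [CharZero k] {L : Type*} [AddCommGroup L] [Module k L]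
    [FiniteDimensional k L] (β : L →ₗ[k] L →ₗ[k] L)
    (leib : ∀ x y z : L, β x (β y z) = β (β x y) z + β y (β x z))
    (hnil : ∀ x : L, IsNilpotent (β x : Module.End k L)) :
    LeibnizNilpotent β (⊤ : Submodule k L) :=
  stmt_6_general β leib hnil
end

section
/- (Lemma) Let L be a left Leibniz algebra over a field k of characteristic 0 and let I be a left ideal of L. Then the right normalizer N^r_L(I) = {a ∈ L : [I,a] ⊆ I} is a subalgebra of L. -/
section RightNormalizer

variable {R : Type*} [CommSemiring R] {M : Type*} [AddCommMonoid M] [Module R M]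

def rightNormalizer (β : M →ₗ[R] M →ₗ[R] M) (U : Submodule R M) : Submodule R M where
  carrier := {a | ∀ u ∈ U, β u a ∈ U}
  zero_mem' _ _ := by simp
  add_mem' ha hb u hu := by
    rw [map_add]
    exact U.add_mem (ha u hu) (hb u hu)
  smul_mem' c a ha u hu := by
    rw [map_smul]
    exact U.smul_mem c (ha u hu)

theorem coe_rightNormalizer (β : M →ₗ[R] M →ₗ[R] M) (U : Submodule R M) :
    (rightNormalizer β U : Set M) = {a | ∀ u ∈ U, β u a ∈ U} :=
  rfl

end RightNormalizer

theorem leibnizSubalgebra_rightNormalizer {k : Type*} [Field k] {L : Type*} [AddCommGroup L]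
    [Module k L] (β : L →ₗ[k] L →ₗ[k] L)
    (leib : ∀ x y z : L, β x (β y z) = β (β x y) z + β y (β x z))
    (I : Submodule k L) (hI : ∀ x : L, ∀ u ∈ I, β x u ∈ I) :
    LeibnizSubalgebra β (rightNormalizer β I) := by
  intro a ha b hb u hu
  -- `[u,[a,b]] = [[u,a],b] + [a,[u,b]]`: `[u,a] ∈ I` is normalized by `b`, and `[u,b] ∈ I` is
  -- carried into `I` by the left ideal property.
  rw [leib u a b]
  exact I.add_mem (hb _ (ha u hu)) (hI a _ (hb u hu))

theorem stmt_7_general {k : Type*} [Field k] {L : Type*} [AddCommGroup L] [Module k L]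
    (β : L →ₗ[k] L →ₗ[k] L)
    (leib : ∀ x y z : L, β x (β y z) = β (β x y) z + β y (β x z))
    (I : Submodule k L) (hI : ∀ x : L, ∀ u ∈ I, β x u ∈ I) :
    ∃ N : Submodule k L, (N : Set L) = {a : L | ∀ u ∈ I, β u a ∈ I} ∧
      LeibnizSubalgebra β N :=
  ⟨rightNormalizer β I, coe_rightNormalizer β I,
    leibnizSubalgebra_rightNormalizer β leib I hI⟩

/-- The right normalizer of a left ideal is a subalgebra. -/
theorem stmt_7 {k : Type*} [Field k] [CharZero k] {L : Type*} [AddCommGroup L] [Module k L]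
    (β : L →ₗ[k] L →ₗ[k] L)
    (leib : ∀ x y z : L, β x (β y z) = β (β x y) z + β y (β x z))
    (I : Submodule k L) (hI : ∀ x : L, ∀ u ∈ I, β x u ∈ I) :
    ∃ N : Submodule k L, (N : Set L) = {a : L | ∀ u ∈ I, β u a ∈ I} ∧
      LeibnizSubalgebra β N :=
  stmt_7_general β leib I hI
end

section
/- (Corollary 1) Let L be a finite-dimensional nilpotent left Leibniz algebra over a field k of characteristic 0 and let M be a subalgebra of L with M ≠ L. Then both the left normalizer N^l_L(M) and the right normalizer N^r_L(M) strictly contain M. -/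
section LowerCentralSeries

variable {k : Type*} [Field k] {L : Type*} [AddCommGroup L] [Module k L]
  (β : L →ₗ[k] L →ₗ[k] L)

lemma bracket_mem_bracketSpan {A B : Submodule k L} {a b : L} (ha : a ∈ A) (hb : b ∈ B) :
    β a b ∈ bracketSpan β A B :=
  Submodule.subset_span ⟨a, ha, b, hb, rfl⟩

lemma bracket_mem_of_mem_bracketSpan {A B S : Submodule k L} {y z : L}
    (h : ∀ a ∈ A, ∀ b ∈ B, β (β a b) z ∈ S) (hy : y ∈ bracketSpan β A B) : β y z ∈ S := by
  have hle : bracketSpan β A B ≤ S.comap (β.flip z) := by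
    refine Submodule.span_le.2 ?_
    rintro _ ⟨a, ha, b, hb, rfl⟩
    exact h a ha b hb
  exact hle hy

lemma bracket_mem_lowerCentralSeriesOf_succ {n : ℕ} (x : L) {y : L}
    (hy : y ∈ lowerCentralSeriesOf β ⊤ n) : β x y ∈ lowerCentralSeriesOf β ⊤ (n + 1) :=
  bracket_mem_bracketSpan β Submodule.mem_top hy

/-- Induction on `m`, rewriting `[[x, c], z] = [x, [c, z]] - [c, [x, z]]`. -/
lemma bracket_mem_lowerCentralSeriesOf_add
    (leib : ∀ x y z : L, β x (β y z) = β (β x y) z + β y (β x z)) (m : ℕ) :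
    ∀ {n : ℕ} {y z : L}, y ∈ lowerCentralSeriesOf β ⊤ m → z ∈ lowerCentralSeriesOf β ⊤ n →
      β y z ∈ lowerCentralSeriesOf β ⊤ (m + n + 1) := by
  induction m with
  | zero =>
    intro n y z _ hz
    rw [Nat.zero_add]
    exact bracket_mem_lowerCentralSeriesOf_succ β y hz
  | succ m ih =>
    intro n y z hy hz
    refine bracket_mem_of_mem_bracketSpan β (fun x _ c hc => ?_) hy
    rw [eq_sub_of_add_eq (leib x c z).symm]
    refine sub_mem ?_ ?_
    · have hcz := ih hc hz
      rw [show m + 1 + n + 1 = m + n + 1 + 1 by omega]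
      exact bracket_mem_lowerCentralSeriesOf_succ β x hcz
    · have hcxz := ih hc (bracket_mem_lowerCentralSeriesOf_succ β x hz)
      rwa [show m + (n + 1) + 1 = m + 1 + n + 1 by omega] at hcxz

lemma exists_mem_lowerCentralSeriesOf_not_mem (hnil : LeibnizNilpotent β ⊤)
    {M : Submodule k L} (hM : M ≠ ⊤) :
    ∃ m, lowerCentralSeriesOf β ⊤ (m + 1) ≤ M ∧
      ∃ x ∈ lowerCentralSeriesOf β ⊤ m, x ∉ M := by
  classical
  obtain ⟨N, hN⟩ := hnil
  have hex : ∃ n, lowerCentralSeriesOf β ⊤ n ≤ M := ⟨N, hN ▸ bot_le⟩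
  have hpos : Nat.find hex ≠ 0 := by
    intro h
    have hC0 := Nat.find_spec hex
    rw [h] at hC0
    exact hM (top_le_iff.1 hC0)
  obtain ⟨m, hm⟩ := Nat.exists_eq_succ_of_ne_zero hpos
  refine ⟨m, ?_, SetLike.not_le_iff_exists.1 (Nat.find_min hex (by omega))⟩
  simpa [hm] using Nat.find_spec hex

end LowerCentralSeries

theorem stmt_8_general {k : Type*} [Field k] {L : Type*} [AddCommGroup L] [Module k L]
    (β : L →ₗ[k] L →ₗ[k] L)
    (leib : ∀ x y z : L, β x (β y z) = β (β x y) z + β y (β x z))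
    (hnil : LeibnizNilpotent β (⊤ : Submodule k L))
    (M : Submodule k L) (hM : LeibnizSubalgebra β M) (hMne : M ≠ ⊤) :
    (M : Set L) ⊂ {a : L | ∀ u ∈ M, β a u ∈ M} ∧
    (M : Set L) ⊂ {a : L | ∀ u ∈ M, β u a ∈ M} := by
  obtain ⟨m, hCM, x, hx, hxM⟩ := exists_mem_lowerCentralSeriesOf_not_mem β hnil hMne
  have hxl : ∀ u ∈ M, β x u ∈ M := fun u _ =>
    hCM (bracket_mem_lowerCentralSeriesOf_add β leib m (n := 0) hx Submodule.mem_top)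
  have hxr : ∀ u ∈ M, β u x ∈ M := fun u _ =>
    hCM (bracket_mem_lowerCentralSeriesOf_succ β u hx)
  constructor
  · exact (Set.ssubset_iff_of_subset fun u hu v hv => hM u hu v hv).2 ⟨x, hxl, hxM⟩
  · exact (Set.ssubset_iff_of_subset fun u hu v hv => hM v hv u hu).2 ⟨x, hxr, hxM⟩

/-- In a nilpotent Leibniz algebra, both normalizers of a proper subalgebra
strictly contain it. -/
theorem stmt_8 {k : Type*} [Field k] [CharZero k] {L : Type*} [AddCommGroup L] [Module k L]
    [FiniteDimensional k L] (β : L →ₗ[k] L →ₗ[k] L)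
    (leib : ∀ x y z : L, β x (β y z) = β (β x y) z + β y (β x z))
    (hnil : LeibnizNilpotent β (⊤ : Submodule k L))
    (M : Submodule k L) (hM : LeibnizSubalgebra β M) (hMne : M ≠ ⊤) :
    (M : Set L) ⊂ {a : L | ∀ u ∈ M, β a u ∈ M} ∧
    (M : Set L) ⊂ {a : L | ∀ u ∈ M, β u a ∈ M} :=
  stmt_8_general β leib hnil M hM hMne
end

section
/- (Corollary 2) Let L be a finite-dimensional nilpotent left Leibniz algebra over a field k of characteristic 0. A subspace V ⊆ L generates L (i.e., the smallest subalgebra of L containing V is L) if and only if V + [L,L] = L. -/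
/-!
Let `C n` be the lower central series of `L`, so `C 1 = [L, L]`. The left Leibniz identity
gives `[C m, C n] ≤ C (m + n + 1)`, in particular `[C n, L] ≤ C (n + 1)`. Hence if `S` is a
subalgebra with `S + C n = L`, then `[L, L] = [S + C n, L] ≤ S + C (n + 1)`, and if moreover
`S + [L, L] = L` then `S + C (n + 1) = L`. By induction `S + C n = L` for all `n`, and
nilpotency gives `S = L`. Conversely `V + [L, L]` is always a subalgebra containing `V`.
-/

section LowerCentralSeries

variable {k : Type*} [Field k] {M : Type*} [AddCommGroup M] [Module k M]
  (β : M →ₗ[k] M →ₗ[k] M)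

lemma mem_bracketSpan {A B : Submodule k M} {a b : M} (ha : a ∈ A) (hb : b ∈ B) :
    β a b ∈ bracketSpan β A B :=
  Submodule.subset_span ⟨a, ha, b, hb, rfl⟩

lemma bracketSpan_le {A B T : Submodule k M} (h : ∀ a ∈ A, ∀ b ∈ B, β a b ∈ T) :
    bracketSpan β A B ≤ T := by
  rw [bracketSpan, Submodule.span_le]
  rintro _ ⟨a, ha, b, hb, rfl⟩
  exact h a ha b hb

variable {β}

lemma bracketSpan_lowerCentralSeriesOf_top_le
    (leib : ∀ x y z : M, β x (β y z) = β (β x y) z + β y (β x z)) (m : ℕ) :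
    ∀ n, bracketSpan β (lowerCentralSeriesOf β (⊤ : Submodule k M) m)
      (lowerCentralSeriesOf β ⊤ n) ≤ lowerCentralSeriesOf β ⊤ (m + n + 1) := by
  induction m with
  | zero => intro n; rw [zero_add]; rfl
  | succ m ih =>
    intro n
    refine bracketSpan_le β fun a ha b hb => ?_
    suffices bracketSpan β ⊤ (lowerCentralSeriesOf β ⊤ m) ≤
        (lowerCentralSeriesOf β ⊤ (m + 1 + n + 1)).comap (β.flip b) from this ha
    refine bracketSpan_le β fun x _ u hu => ?_
    have hxub : β (β x u) b = β x (β u b) - β u (β x b) := by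
      rw [leib x u b, add_sub_cancel_right]
    rw [Submodule.mem_comap, LinearMap.flip_apply, hxub]
    refine sub_mem ?_ ?_
    · have hub := ih n (mem_bracketSpan β hu hb)
      rw [show m + 1 + n + 1 = m + n + 1 + 1 by ring]
      exact mem_bracketSpan β trivial hub
    · have hxb : β x b ∈ lowerCentralSeriesOf β ⊤ (n + 1) := mem_bracketSpan β trivial hb
      rw [show m + 1 + n + 1 = m + (n + 1) + 1 by ring]
      exact ih (n + 1) (mem_bracketSpan β hu hxb)

lemma bracketSpan_lowerCentralSeriesOf_top_top_le
    (leib : ∀ x y z : M, β x (β y z) = β (β x y) z + β y (β x z)) (n : ℕ) :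
    bracketSpan β (lowerCentralSeriesOf β (⊤ : Submodule k M) n) ⊤ ≤
      lowerCentralSeriesOf β ⊤ (n + 1) :=
  bracketSpan_lowerCentralSeriesOf_top_le leib n 0

lemma bracketSpan_top_top_le_sup_of_sup_eq_top
    (leib : ∀ x y z : M, β x (β y z) = β (β x y) z + β y (β x z))
    {S : Submodule k M} (hS : LeibnizSubalgebra β S) {n : ℕ}
    (hn : S ⊔ lowerCentralSeriesOf β ⊤ n = ⊤) :
    bracketSpan β ⊤ ⊤ ≤ S ⊔ lowerCentralSeriesOf β ⊤ (n + 1) := by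
  refine bracketSpan_le β fun a _ b _ => ?_
  obtain ⟨s, hs, u, hu, rfl⟩ := Submodule.mem_sup.mp (hn.ge (Submodule.mem_top : a ∈ ⊤))
  rw [map_add, LinearMap.add_apply]
  refine add_mem ?_ (Submodule.mem_sup_right
    (bracketSpan_lowerCentralSeriesOf_top_top_le leib n (mem_bracketSpan β hu trivial)))
  obtain ⟨t, ht, v, hv, rfl⟩ := Submodule.mem_sup.mp (hn.ge (Submodule.mem_top : b ∈ ⊤))
  rw [map_add]
  exact add_mem (Submodule.mem_sup_left (hS s hs t ht))
    (Submodule.mem_sup_right (mem_bracketSpan β trivial hv))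

lemma sup_lowerCentralSeriesOf_top_eq_top
    (leib : ∀ x y z : M, β x (β y z) = β (β x y) z + β y (β x z))
    {S : Submodule k M} (hS : LeibnizSubalgebra β S) (h : S ⊔ bracketSpan β ⊤ ⊤ = ⊤) (n : ℕ) :
    S ⊔ lowerCentralSeriesOf β ⊤ n = ⊤ := by
  induction n with
  | zero => exact sup_top_eq S
  | succ n ih =>
    refine top_le_iff.mp ?_
    calc ⊤ = S ⊔ bracketSpan β ⊤ ⊤ := h.symm
      _ ≤ S ⊔ (S ⊔ lowerCentralSeriesOf β ⊤ (n + 1)) :=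
        sup_le_sup_left (bracketSpan_top_top_le_sup_of_sup_eq_top leib hS ih) S
      _ = S ⊔ lowerCentralSeriesOf β ⊤ (n + 1) := by rw [← sup_assoc, sup_idem]

lemma LeibnizSubalgebra.eq_top_of_sup_bracketSpan_eq_top
    (leib : ∀ x y z : M, β x (β y z) = β (β x y) z + β y (β x z))
    (hnil : LeibnizNilpotent β (⊤ : Submodule k M))
    {S : Submodule k M} (hS : LeibnizSubalgebra β S) (h : S ⊔ bracketSpan β ⊤ ⊤ = ⊤) :
    S = ⊤ := by
  obtain ⟨n, hn⟩ := hnil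
  simpa [hn] using sup_lowerCentralSeriesOf_top_eq_top leib hS h n

lemma leibnizSubalgebra_sup_bracketSpan_top_top (V : Submodule k M) :
    LeibnizSubalgebra β (V ⊔ bracketSpan β ⊤ ⊤) :=
  fun _ _ _ _ => Submodule.mem_sup_right (mem_bracketSpan β trivial trivial)

end LowerCentralSeries

theorem stmt_9_general {k : Type*} [Field k] {L : Type*} [AddCommGroup L] [Module k L]
    (β : L →ₗ[k] L →ₗ[k] L)
    (leib : ∀ x y z : L, β x (β y z) = β (β x y) z + β y (β x z))
    (hnil : LeibnizNilpotent β (⊤ : Submodule k L)) (V : Submodule k L) :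
    (∀ S : Submodule k L, LeibnizSubalgebra β S → V ≤ S → S = ⊤) ↔
      V ⊔ bracketSpan β ⊤ ⊤ = ⊤ := by
  refine ⟨fun hgen => hgen _ (leibnizSubalgebra_sup_bracketSpan_top_top V) le_sup_left,
    fun hsup S hS hVS => hS.eq_top_of_sup_bracketSpan_eq_top leib hnil ?_⟩
  exact top_le_iff.mp (hsup.ge.trans (sup_le_sup_right hVS _))

/-- A subspace `V` generates a nilpotent Leibniz algebra `L` iff `V + [L,L] = L`. -/
theorem stmt_9 {k : Type*} [Field k] [CharZero k] {L : Type*} [AddCommGroup L] [Module k L]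
    [FiniteDimensional k L] (β : L →ₗ[k] L →ₗ[k] L)
    (leib : ∀ x y z : L, β x (β y z) = β (β x y) z + β y (β x z))
    (hnil : LeibnizNilpotent β (⊤ : Submodule k L)) (V : Submodule k L) :
    (∀ S : Submodule k L, LeibnizSubalgebra β S → V ≤ S → S = ⊤) ↔
      V ⊔ bracketSpan β ⊤ ⊤ = ⊤ :=
  stmt_9_general β leib hnil V
end

section
/- (Proposition 5) Let L be a finite-dimensional left Leibniz algebra over a field k of characteristic 0 with dim L ≥ 1. Then for every x ∈ L the left multiplication operator l_x and the right multiplication operator r_x are degenerate linear operators: det(l_x) = 0 and det(r_x) = 0. -/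
/-!
The squares `[y,y]` span a subspace `I` on which left multiplication vanishes (the Leibniz
identity with `x = y` gives `[[y,y],z] = 0`), and which every `l_x` preserves, `l_x` being a
derivation. As `l_x x = [x,x] ∈ I`, the map `l_x` sends `I + k x` into `I`, so it is not
injective when `x ∉ I`, while `l_x = 0` when `x ∈ I`. Every `r_x` kills `I`, so it is singular
unless `I = 0`; in that case the bracket is antisymmetric and `r_x = -l_x`.
-/

theorem LinearMap.not_injective_of_le_comap_of_apply_mem {K V : Type*} [Field K]
    [AddCommGroup V] [Module K V] [FiniteDimensional K V] {f : V →ₗ[K] V} {W : Submodule K V}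
    (hW : W ≤ W.comap f) {x : V} (hxW : x ∉ W) (hfx : f x ∈ W) : ¬Function.Injective f := by
  intro hf
  have hsurj : Function.Surjective (f.restrict hW) :=
    LinearMap.injective_iff_surjective.mp fun u v huv => Subtype.ext (hf congr($huv))
  obtain ⟨w, hw⟩ := hsurj ⟨f x, hfx⟩
  exact hxW (hf congr(Subtype.val $hw) ▸ w.2)

section LeibnizKernel

variable {k L : Type*} [Field k] [AddCommGroup L] [Module k L] (β : L →ₗ[k] L →ₗ[k] L)

def squareSpan : Submodule k L :=
  Submodule.span k (Set.range fun y => β y y)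

theorem square_mem_squareSpan (y : L) : β y y ∈ squareSpan β :=
  Submodule.subset_span ⟨y, rfl⟩

theorem apply_add_apply_swap (a b : L) : β a b + β b a = β (a + b) (a + b) - β a a - β b b := by
  simp only [map_add, LinearMap.add_apply]
  abel

theorem apply_add_apply_swap_mem_squareSpan (a b : L) : β a b + β b a ∈ squareSpan β := by
  rw [apply_add_apply_swap]
  exact sub_mem (sub_mem (square_mem_squareSpan β _) (square_mem_squareSpan β a))
    (square_mem_squareSpan β b)

variable {β}
variable (leib : ∀ x y z : L, β x (β y z) = β (β x y) z + β y (β x z))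
include leib

theorem apply_square_eq_zero (y z : L) : β (β y y) z = 0 :=
  right_eq_add.mp (leib y y z)

theorem squareSpan_le_ker : squareSpan β ≤ LinearMap.ker β := by
  refine Submodule.span_le.mpr ?_
  rintro _ ⟨y, rfl⟩
  exact LinearMap.ext (apply_square_eq_zero leib y)

theorem squareSpan_le_comap (x : L) : squareSpan β ≤ (squareSpan β).comap (β x) := by
  refine Submodule.span_le.mpr ?_
  rintro _ ⟨y, rfl⟩
  -- `l_x` is a derivation, so it sends `[y,y]` to `[[x,y],y] + [y,[x,y]]`.
  simpa only [SetLike.mem_coe, Submodule.mem_comap, leib x y y]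
    using apply_add_apply_swap_mem_squareSpan β (β x y) y

variable [FiniteDimensional k L] [Nontrivial L]

theorem det_apply_eq_zero (x : L) : LinearMap.det (β x) = 0 := by
  rw [LinearMap.det_eq_zero_iff_ker_ne_bot, Ne, LinearMap.ker_eq_bot]
  by_cases hx : x ∈ squareSpan β
  · rw [LinearMap.mem_ker.mp (squareSpan_le_ker leib hx)]
    exact Function.not_injective_const
  · exact LinearMap.not_injective_of_le_comap_of_apply_mem (squareSpan_le_comap leib x) hx
      (square_mem_squareSpan β x)

theorem det_flip_apply_eq_zero (x : L) : LinearMap.det (β.flip x) = 0 := by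
  rw [LinearMap.det_eq_zero_iff_ker_ne_bot]
  by_cases hsq : ∃ y, β y y ≠ 0
  · obtain ⟨y, hy⟩ := hsq
    exact (Submodule.ne_bot_iff _).mpr ⟨β y y, apply_square_eq_zero leib y x, hy⟩
  · push Not at hsq
    have hflip : β.flip x = -β x := by
      ext y
      have hanti := apply_add_apply_swap β y x
      rw [hsq, hsq, hsq, sub_zero, sub_zero] at hanti
      exact eq_neg_of_add_eq_zero_left hanti
    rw [hflip, LinearMap.ker_neg, ← LinearMap.det_eq_zero_iff_ker_ne_bot]
    exact det_apply_eq_zero leib x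

end LeibnizKernel

theorem stmt_16_general {k : Type*} [Field k] {L : Type*} [AddCommGroup L] [Module k L]
    [FiniteDimensional k L] (β : L →ₗ[k] L →ₗ[k] L)
    (leib : ∀ x y z : L, β x (β y z) = β (β x y) z + β y (β x z))
    (hdim : 1 ≤ Module.finrank k L) :
    ∀ x : L, LinearMap.det (β x) = 0 ∧ LinearMap.det (β.flip x) = 0 := by
  have : Nontrivial L := Module.nontrivial_of_finrank_pos hdim
  exact fun x => ⟨det_apply_eq_zero leib x, det_flip_apply_eq_zero leib x⟩

/-- In a nonzero finite-dimensional Leibniz algebra, all left and right multiplication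
operators are degenerate. -/
theorem stmt_16 {k : Type*} [Field k] [CharZero k] {L : Type*} [AddCommGroup L] [Module k L]
    [FiniteDimensional k L] (β : L →ₗ[k] L →ₗ[k] L)
    (leib : ∀ x y z : L, β x (β y z) = β (β x y) z + β y (β x z))
    (hdim : 1 ≤ Module.finrank k L) :
    ∀ x : L, LinearMap.det (β x) = 0 ∧ LinearMap.det (β.flip x) = 0 :=
  stmt_16_general β leib hdim
end

section
/- (Proposition 6) Let L be a finite-dimensional left Leibniz algebra over a field k of characteristic 0. Then L has a faithful representation of dimension at most dim L + 1: there exist a k-vector space M with dim M ≤ dim L + 1 and bilinear maps L × M → M, (a,m) ↦ a·m, and M × L → M, (m,a) ↦ m·a, satisfying a·(b·m) = [a,b]·m + b·(a·m), a·(m·b) = (a·m)·b + m·[a,b], and m·[a,b] = (m·a)·b + a·(m·b) for all a,b ∈ L, m ∈ M, such that the only x ∈ L with x·m = 0 and m·x = 0 for all m ∈ M is x = 0. -/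
universe u v

section AdjointWithUnit

variable {k : Type u} [Field k] {L : Type v} [AddCommGroup L] [Module k L]

def adjointWithUnitLeft (β : L →ₗ[k] L →ₗ[k] L) : L →ₗ[k] L × k →ₗ[k] L × k :=
  (β.compl₂ (LinearMap.fst k L k)).compr₂ (LinearMap.inl k L k)

def adjointWithUnitRight : L × k →ₗ[k] L →ₗ[k] L × k :=
  ((LinearMap.lsmul k L).comp (LinearMap.snd k L k)).compr₂ (LinearMap.inl k L k)

@[simp]
theorem adjointWithUnitLeft_apply (β : L →ₗ[k] L →ₗ[k] L) (a : L) (m : L × k) :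
    adjointWithUnitLeft β a m = (β a m.1, 0) :=
  rfl

@[simp]
theorem adjointWithUnitRight_apply (m : L × k) (a : L) :
    adjointWithUnitRight m a = (m.2 • a, 0) :=
  rfl

theorem adjointWithUnitLeft_leibniz (β : L →ₗ[k] L →ₗ[k] L)
    (leib : ∀ x y z : L, β x (β y z) = β (β x y) z + β y (β x z)) (a b : L) (m : L × k) :
    adjointWithUnitLeft β a (adjointWithUnitLeft β b m) =
      adjointWithUnitLeft β (β a b) m +
        adjointWithUnitLeft β b (adjointWithUnitLeft β a m) := by
  simp [leib a b m.1]

theorem adjointWithUnitLeft_right (β : L →ₗ[k] L →ₗ[k] L) (a b : L) (m : L × k) :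
    adjointWithUnitLeft β a (adjointWithUnitRight m b) =
      adjointWithUnitRight (adjointWithUnitLeft β a m) b + adjointWithUnitRight m (β a b) := by
  simp

theorem adjointWithUnitRight_bracket (β : L →ₗ[k] L →ₗ[k] L) (a b : L) (m : L × k) :
    adjointWithUnitRight m (β a b) =
      adjointWithUnitRight (adjointWithUnitRight m a) b +
        adjointWithUnitLeft β a (adjointWithUnitRight m b) := by
  simp

theorem eq_zero_of_adjointWithUnitRight_eq_zero {x : L}
    (hx : adjointWithUnitRight ((0, 1) : L × k) x = 0) : x = 0 := by
  simpa using congrArg Prod.fst hx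

end AdjointWithUnit

theorem stmt_17_general {k : Type u} [Field k] {L : Type v} [AddCommGroup L]
    [Module k L] [FiniteDimensional k L] (β : L →ₗ[k] L →ₗ[k] L)
    (leib : ∀ x y z : L, β x (β y z) = β (β x y) z + β y (β x z)) :
    ∃ (M : Type (max u v)) (_ : AddCommGroup M) (_ : Module k M),
      FiniteDimensional k M ∧ Module.finrank k M ≤ Module.finrank k L + 1 ∧
      ∃ (ρl : L →ₗ[k] M →ₗ[k] M) (ρr : M →ₗ[k] L →ₗ[k] M),
        (∀ a b : L, ∀ m : M, ρl a (ρl b m) = ρl (β a b) m + ρl b (ρl a m)) ∧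
        (∀ a b : L, ∀ m : M, ρl a (ρr m b) = ρr (ρl a m) b + ρr m (β a b)) ∧
        (∀ a b : L, ∀ m : M, ρr m (β a b) = ρr (ρr m a) b + ρl a (ρr m b)) ∧
        (∀ x : L, (∀ m : M, ρl x m = 0 ∧ ρr m x = 0) → x = 0) := by
  refine ⟨L × k, inferInstance, inferInstance, inferInstance,
    by rw [Module.finrank_prod, Module.finrank_self],
    adjointWithUnitLeft β, adjointWithUnitRight, adjointWithUnitLeft_leibniz β leib,
    adjointWithUnitLeft_right β, adjointWithUnitRight_bracket β,
    fun x hx => eq_zero_of_adjointWithUnitRight_eq_zero (hx (0, 1)).2⟩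

/-- Every finite-dimensional Leibniz algebra has a faithful representation of dimension
at most `dim L + 1`. -/
theorem stmt_17 {k : Type u} [Field k] [CharZero k] {L : Type v} [AddCommGroup L]
    [Module k L] [FiniteDimensional k L] (β : L →ₗ[k] L →ₗ[k] L)
    (leib : ∀ x y z : L, β x (β y z) = β (β x y) z + β y (β x z)) :
    ∃ (M : Type (max u v)) (_ : AddCommGroup M) (_ : Module k M),
      FiniteDimensional k M ∧ Module.finrank k M ≤ Module.finrank k L + 1 ∧
      ∃ (ρl : L →ₗ[k] M →ₗ[k] M) (ρr : M →ₗ[k] L →ₗ[k] M),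
        (∀ a b : L, ∀ m : M, ρl a (ρl b m) = ρl (β a b) m + ρl b (ρl a m)) ∧
        (∀ a b : L, ∀ m : M, ρl a (ρr m b) = ρr (ρl a m) b + ρr m (β a b)) ∧
        (∀ a b : L, ∀ m : M, ρr m (β a b) = ρr (ρr m a) b + ρl a (ρr m b)) ∧
        (∀ x : L, (∀ m : M, ρl x m = 0 ∧ ρr m x = 0) → x = 0) :=
  stmt_17_general β leib
end
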